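/- Let $m_1, \dots, m_n$ be positive integers, $b$ an integer, and $m$ a positive integer with $\mathrm{lcm}(m_1, \dots, m_n) \mid m$. Define $E(b; m_1, \dots, m_n) = \frac{1}{m} \sum_{j=1}^m C_{m_1}(j) \cdots C_{m_n}(j) e^{2\pi i b j / m}$. Then $\sum_{d_1 \mid m_1, \dots, d_n \mid m_n} E(b; d_1, \dots, d_n) = J(b; m_1, \dots, m_n)$, where $J(b; m_1, \dots, m_n) = \frac{m_1 \cdots m_n}{\mathrm{lcm}(m_1, \dots, m_n)}$ if $\frac{m}{\mathrm{lcm}(m_1, \dots, m_n)} \mid b$, and $0$ otherwise. -/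

import Mathlib

open scoped Classical

noncomputable def ramanujanSum (m : ℕ) (a : ℤ) : ℂ :=
  ∑ j ∈ (Finset.Icc 1 m).filter (fun j => Nat.gcd j m = 1),
    Complex.exp (2 * Real.pi * Complex.I * j * a / m)

noncomputable def Efun (m : ℕ) (b : ℤ) {n : ℕ} (mv : Fin n → ℕ) : ℂ :=
  (1 / (m : ℂ)) * ∑ j ∈ Finset.Icc 1 m,
    (∏ i, ramanujanSum (mv i) j) * Complex.exp (2 * Real.pi * Complex.I * b * j / m)

/-! Grouping `j ∈ [1, N]` by `gcd(j, N)` shows that `∑_{d ∣ N} C_d(a)` is the complete sum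
`∑_{j=1}^N e(aj/N)`, which is `N` or `0` according as `N ∣ a`. Expanding the product, the sum of
`∏ C_{d_i}(j)` over all `d_i ∣ m_i` is therefore `∏ m_i` when `lcm(m_i) ∣ j` and `0` otherwise, so
`∑ E` collapses to a complete exponential sum over the multiples of `lcm(m_i)` in `[1, m]`, i.e. one
of modulus `m / lcm(m_i)`. -/

open Finset Complex Real

theorem sum_Icc_pow_eq_zero {R : Type*} [CommRing R] [IsDomain R] {z : R} {M : ℕ}
    (hz : z ^ M = 1) (hz1 : z ≠ 1) : ∑ j ∈ Icc 1 M, z ^ j = 0 := by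
  have hgeom : ∑ j ∈ range M, z ^ j = 0 := by
    have := geom_sum_mul z M
    rw [hz, sub_self] at this
    exact (mul_eq_zero.mp this).resolve_right (sub_ne_zero.mpr hz1)
  rw [← Ico_add_one_right_eq_Icc, sum_Ico_eq_sum_range, add_tsub_cancel_right]
  simp_rw [pow_add, pow_one, ← mul_sum, hgeom, mul_zero]

theorem sum_Icc_cexp_eq_ite (M : ℕ) (b : ℤ) :
    ∑ j ∈ Icc 1 M, cexp (2 * π * I * b * j / M) = if (M : ℤ) ∣ b then (M : ℂ) else 0 := by
  rcases M.eq_zero_or_pos with rfl | hM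
  · simp
  set ζ := cexp (2 * π * I / M) with hζdef
  have hζ : IsPrimitiveRoot ζ M := isPrimitiveRoot_exp M hM.ne'
  have hpow : ∀ j : ℕ, cexp (2 * π * I * b * j / M) = (ζ ^ b) ^ j := by
    intro j
    rw [← zpow_natCast, ← zpow_mul, hζdef, ← exp_int_mul]
    push_cast
    ring_nf
  have hroot : (ζ ^ b) ^ M = 1 := by
    rw [← zpow_natCast, ← zpow_mul, mul_comm, zpow_mul, zpow_natCast, hζ.pow_eq_one, one_zpow]
  simp_rw [hpow]
  split_ifs with h
  · simp [(hζ.zpow_eq_one_iff_dvd b).mpr h]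
  · exact sum_Icc_pow_eq_zero hroot ((hζ.zpow_eq_one_iff_dvd b).not.mpr h)

theorem ramanujanSum_eq_sum_filter_gcd {g : ℕ} (hg : 0 < g) (e : ℕ) (a : ℤ) :
    ramanujanSum e a =
      ∑ x ∈ Icc 1 (g * e) with (g * e).gcd x = g, cexp (2 * π * I * a * x / (g * e : ℕ)) := by
  refine sum_nbij' (g * ·) (· / g) ?_ ?_ ?_ ?_ ?_
  · intro k hk
    simp only [mem_filter, mem_Icc] at hk ⊢
    refine ⟨⟨Nat.mul_pos hg hk.1.1, Nat.mul_le_mul_left g hk.1.2⟩, ?_⟩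
    rw [Nat.gcd_mul_left, Nat.gcd_comm, hk.2, mul_one]
  · intro x hx
    simp only [mem_filter, mem_Icc] at hx ⊢
    obtain ⟨y, rfl⟩ : g ∣ x := hx.2 ▸ Nat.gcd_dvd_right _ _
    rw [Nat.gcd_mul_left, mul_eq_left₀ hg.ne', Nat.gcd_comm] at hx
    rw [Nat.mul_div_cancel_left _ hg]
    exact ⟨⟨Nat.pos_of_mul_pos_left hx.1.1, Nat.le_of_mul_le_mul_left hx.1.2 hg⟩, hx.2⟩
  · exact fun k _ => Nat.mul_div_cancel_left _ hg
  · intro x hx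
    simp only [mem_filter] at hx
    exact Nat.mul_div_cancel' (hx.2 ▸ Nat.gcd_dvd_right _ _)
  · intro k hk
    simp only [mem_filter, mem_Icc] at hk
    have he : (e : ℂ) ≠ 0 := by exact_mod_cast Nat.one_le_iff_ne_zero.mp (hk.1.1.trans hk.1.2)
    have hgC : (g : ℂ) ≠ 0 := by exact_mod_cast hg.ne'
    congr 1
    push_cast
    field_simp

theorem sum_divisors_ramanujanSum (N : ℕ) (a : ℤ) :
    ∑ d ∈ N.divisors, ramanujanSum d a = if (N : ℤ) ∣ a then (N : ℂ) else 0 := by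
  rcases N.eq_zero_or_pos with rfl | hN
  · simp
  have hgcd : ∀ x ∈ Icc 1 N, N.gcd x ∈ N.divisors := fun x _ =>
    Nat.mem_divisors.mpr ⟨Nat.gcd_dvd_left _ _, hN.ne'⟩
  rw [← sum_Icc_cexp_eq_ite, ← Nat.sum_div_divisors, ← sum_fiberwise_of_maps_to hgcd]
  refine sum_congr rfl fun g hg => ?_
  obtain ⟨e, he⟩ := Nat.dvd_of_mem_divisors hg
  have hg0 : 0 < g := Nat.pos_of_mem_divisors hg
  subst he
  rw [Nat.mul_div_cancel_left _ hg0, ramanujanSum_eq_sum_filter_gcd hg0]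

theorem sum_piFinset_divisors_prod_ramanujanSum {ι : Type*} [Fintype ι] [DecidableEq ι]
    (mv : ι → ℕ) (a : ℤ) :
    ∑ d ∈ Fintype.piFinset (fun i => (mv i).divisors), ∏ i, ramanujanSum (d i) a =
      if ((univ.lcm mv : ℕ) : ℤ) ∣ a then ((∏ i, mv i : ℕ) : ℂ) else 0 := by
  rw [← prod_univ_sum (fun i => (mv i).divisors) (fun _ d => ramanujanSum d a)]
  simp_rw [sum_divisors_ramanujanSum, Fintype.prod_ite_zero, Int.natCast_dvd,
    Finset.lcm_dvd_iff, mem_univ, true_implies, Nat.cast_prod]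

theorem sum_filter_dvd_Icc {M : Type*} [AddCommMonoid M] {L : ℕ} (hL : 0 < L) (m : ℕ)
    (f : ℕ → M) : ∑ j ∈ Icc 1 m with L ∣ j, f j = ∑ k ∈ Icc 1 (m / L), f (L * k) := by
  refine (sum_nbij' (L * ·) (· / L) ?_ ?_ ?_ ?_ ?_).symm
  · intro k hk
    simp only [mem_filter, mem_Icc] at hk ⊢
    exact ⟨⟨Nat.mul_pos hL hk.1, (Nat.mul_le_mul_left L hk.2).trans (Nat.mul_div_le m L)⟩,
      dvd_mul_right L k⟩
  · intro j hj
    simp only [mem_filter, mem_Icc] at hj ⊢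
    exact ⟨(Nat.one_le_div_iff hL).mpr (Nat.le_of_dvd hj.1.1 hj.2), Nat.div_le_div_right hj.1.2⟩
  · exact fun k _ => Nat.mul_div_cancel_left _ hL
  · exact fun j hj => Nat.mul_div_cancel' (mem_filter.mp hj).2
  · exact fun _ _ => rfl

theorem sum_Efun_eq_general (n m : ℕ) (hm : 0 < m) (mv : Fin n → ℕ)
    (b : ℤ) (hL : Finset.lcm Finset.univ mv ∣ m) :
    ∑ d ∈ Fintype.piFinset (fun i => (mv i).divisors), Efun m b d =
      if ((m / Finset.lcm Finset.univ mv : ℕ) : ℤ) ∣ b then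
        ((∏ i, mv i : ℕ) : ℂ) / ((Finset.lcm Finset.univ mv : ℕ) : ℂ)
      else 0 := by
  generalize hLdef : univ.lcm mv = L at hL ⊢
  have hL0 : 0 < L := Nat.pos_of_dvd_of_pos hL hm
  have hLC : (L : ℂ) ≠ 0 := by exact_mod_cast hL0.ne'
  have hmL : ((m / L : ℕ) : ℂ) ≠ 0 := by exact_mod_cast (Nat.div_pos (Nat.le_of_dvd hm hL) hL0).ne'
  have hmC : (m : ℂ) = L * (m / L : ℕ) := by exact_mod_cast (Nat.mul_div_cancel' hL).symm
  calc ∑ d ∈ Fintype.piFinset (fun i => (mv i).divisors), Efun m b d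
      = (1 / m) * ∑ j ∈ Icc 1 m, (∑ d ∈ Fintype.piFinset (fun i => (mv i).divisors),
          ∏ i, ramanujanSum (d i) j) * cexp (2 * π * I * b * j / m) := by
        simp only [Efun, ← mul_sum, sum_mul]
        rw [sum_comm]
    _ = (1 / m) * (∏ i, mv i : ℕ) * ∑ k ∈ Icc 1 (m / L),
          cexp (2 * π * I * b * (L * k : ℕ) / m) := by
        simp_rw [sum_piFinset_divisors_prod_ramanujanSum, hLdef, ite_mul, zero_mul, ← sum_filter,
          Int.natCast_dvd_natCast, sum_filter_dvd_Icc hL0, mul_sum, mul_assoc]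
    _ = (1 / m) * (∏ i, mv i : ℕ) * ∑ k ∈ Icc 1 (m / L),
          cexp (2 * π * I * b * k / (m / L : ℕ)) := by
        simp_rw [hmC, Nat.cast_mul, mul_left_comm _ (L : ℂ), mul_div_mul_left _ _ hLC]
    _ = _ := by
        rw [sum_Icc_cexp_eq_ite]
        split_ifs
        · rw [hmC]
          field_simp
        · rw [mul_zero]

theorem sum_Efun_eq (n m : ℕ) (hm : 0 < m) (mv : Fin n → ℕ) (hpos : ∀ i, 0 < mv i)
    (b : ℤ) (hL : Finset.lcm Finset.univ mv ∣ m) :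
    ∑ d ∈ Fintype.piFinset (fun i => (mv i).divisors), Efun m b d =
      if ((m / Finset.lcm Finset.univ mv : ℕ) : ℤ) ∣ b then
        ((∏ i, mv i : ℕ) : ℂ) / ((Finset.lcm Finset.univ mv : ℕ) : ℂ)
      else 0 :=
  sum_Efun_eq_general n m hm mv b hL
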